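/- arXiv:2311.16578 — 4 statements merged into one kernel-verified Lean document; each statement's English description precedes it below -/
import Mathlib

section
/- Let a be a point of P^2(\bar{F}_q) whose Frobenius orbit {a, F(a), F^2(a), F^3(a)} has exactly 4 elements (i.e., a is a q^4-point). Then either all four points of the orbit lie on a common line, or no three of them are collinear. -/
open Projectivization
open scoped LinearAlgebra.Projectivization

variable {K : Type} [Field K]

/-- The projective plane over `K`, as the projectivization of `K^3`. -/
abbrev Pt (K : Type) [Field K] := ℙ K (Fin 3 → K)

/-- Lines in the projective plane over `K`: projectivized nonzero linear forms. -/
abbrev Ln (K : Type) [Field K] := ℙ K ((Fin 3 → K) →ₗ[K] K)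

/-- Incidence: the point lies on the line. -/
def OnLine (x : Pt K) (ℓ : Ln K) : Prop := ℓ.rep x.rep = 0

/-- Three points are collinear: some nonzero linear form vanishes on all of them. -/
def Collinear3 (a b c : Pt K) : Prop :=
  ∃ f : (Fin 3 → K) →ₗ[K] K, f ≠ 0 ∧ f a.rep = 0 ∧ f b.rep = 0 ∧ f c.rep = 0

/-- The map on the projective plane induced by `x ↦ x ^ q` on coordinates. -/
noncomputable def Frob (q : ℕ) (x : Pt K) : Pt K :=
  if hq : q = 0 then x else
  Projectivization.mk K (fun i => x.rep i ^ q) (by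
    intro h
    apply x.rep_nonzero
    funext i
    have hi := congrFun h i
    simpa using (pow_eq_zero_iff hq).mp (by simpa using hi))

/-- The algebraic closure of the field with `p ^ n` elements. -/
abbrev Kbar (p n : ℕ) [Fact p.Prime] := AlgebraicClosure (GaloisField p n)

/-!
Raising the coefficients of a linear form to the `q`-th power shows that `F` maps collinear
triples to collinear triples. A collinear triple of orbit indices is the complement of a single
index of `ℤ/4`, and its rotations cover every triple `{0, 1, m}`; so every `F^m a` is collinear
with `a` and `F a`. Since `a ≠ F a`, the line `z ↦ det (a, F a, z)` then contains the whole orbit.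
-/

open scoped Matrix

lemma dotProduct_rep_mk_eq_zero {ι : Type*} [Fintype ι] {w v : ι → K} (hv : v ≠ 0)
    (h : w ⬝ᵥ v = 0) : w ⬝ᵥ (mk K v hv).rep = 0 := by
  obtain ⟨c, hc⟩ := exists_smul_eq_mk_rep K v hv
  rw [← hc, Units.smul_def, dotProduct_smul, h, smul_zero]

namespace Collinear3

lemma of_mem {a b c x y z : Pt K} (h : Collinear3 a b c) (hx : x ∈ ({a, b, c} : Set (Pt K)))
    (hy : y ∈ ({a, b, c} : Set (Pt K))) (hz : z ∈ ({a, b, c} : Set (Pt K))) :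
    Collinear3 x y z := by
  obtain ⟨f, hf, ha, hb, hc⟩ := h
  have hvanish : ∀ t ∈ ({a, b, c} : Set (Pt K)), f t.rep = 0 := by
    rintro t (rfl | rfl | rfl) <;> assumption
  exact ⟨f, hf, hvanish x hx, hvanish y hy, hvanish z hz⟩

lemma iff_dotProduct {a b c : Pt K} :
    Collinear3 a b c ↔ ∃ w ≠ 0, w ⬝ᵥ a.rep = 0 ∧ w ⬝ᵥ b.rep = 0 ∧ w ⬝ᵥ c.rep = 0 := by
  constructor
  · rintro ⟨f, hf, hfa⟩
    refine ⟨(dotProductEquiv K (Fin 3)).symm f, ?_, ?_⟩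
    · simpa using hf
    · simpa [← dotProductEquiv_apply_apply] using hfa
  · rintro ⟨w, hw, hwa⟩
    exact ⟨dotProductEquiv K (Fin 3) w, by simpa using hw, by simpa using hwa⟩

lemma det_eq_zero {a b c : Pt K} (h : Collinear3 a b c) :
    Matrix.det ![a.rep, b.rep, c.rep] = 0 := by
  obtain ⟨w, hw, ha, hb, hc⟩ := iff_dotProduct.1 h
  refine Matrix.exists_mulVec_eq_zero_iff.1 ⟨w, hw, ?_⟩
  ext i
  fin_cases i <;> simpa [Matrix.mulVec, dotProduct_comm]

lemma frob (p n : ℕ) [ExpChar K p] {a b c : Pt K} (h : Collinear3 a b c) :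
    Collinear3 (Frob (p ^ n) a) (Frob (p ^ n) b) (Frob (p ^ n) c) := by
  set φ := iterateFrobenius K p n
  obtain ⟨w, hw, ha, hb, hc⟩ := iff_dotProduct.1 h
  have hFrob : ∀ x : Pt K, w ⬝ᵥ x.rep = 0 → φ ∘ w ⬝ᵥ (Frob (p ^ n) x).rep = 0 := by
    intro x hx
    rw [Frob, dif_neg (pow_ne_zero n (expChar_pos K p).ne')]
    apply dotProduct_rep_mk_eq_zero
    have hpow : (fun i => x.rep i ^ p ^ n) = φ ∘ x.rep :=
      funext fun i => (iterateFrobenius_def ..).symm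
    rw [hpow, ← RingHom.map_dotProduct, hx, map_zero]
  have hφw : φ ∘ w ≠ 0 := fun h0 => hw (funext fun i => φ.injective (by simpa using congrFun h0 i))
  exact iff_dotProduct.2 ⟨φ ∘ w, hφw, hFrob a ha, hFrob b hb, hFrob c hc⟩

lemma iterate {F : Pt K → Pt K}
    (hF : ∀ {a b c}, Collinear3 a b c → Collinear3 (F a) (F b) (F c)) (s : ℕ) {a b c : Pt K}
    (h : Collinear3 a b c) : Collinear3 (F^[s] a) (F^[s] b) (F^[s] c) := by
  induction s with
  | zero => exact h
  | succ s ih => simpa only [Function.iterate_succ_apply'] using hF ih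

end Collinear3

lemma exists_line_of_collinear3 {x y : Pt K} (hxy : x ≠ y) :
    ∃ ℓ : Ln K, ∀ z, Collinear3 x y z → OnLine z ℓ := by
  have hcross : x.rep ⨯₃ y.rep ≠ 0 := by
    rw [crossProduct_ne_zero_iff_linearIndependent,
      ← independent_mk_iff_LinearIndependent x.rep_nonzero y.rep_nonzero]
    simpa using hxy
  have hform : dotProductEquiv K (Fin 3) (x.rep ⨯₃ y.rep) ≠ 0 := by simpa using hcross
  refine ⟨mk K _ hform, fun z hz => ?_⟩
  obtain ⟨c, hc⟩ := exists_smul_eq_mk_rep K _ hform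
  have hdet : x.rep ⨯₃ y.rep ⬝ᵥ z.rep = 0 := by
    rw [dotProduct_comm, triple_product_permutation, triple_product_eq_det]
    exact hz.det_eq_zero
  simp [OnLine, ← hc, hdet]

lemma Fin.exists_add_cover_of_ne (i j k m : Fin 4) (hij : i ≠ j) (hik : i ≠ k) (hjk : j ≠ k) :
    ∃ s : Fin 4, ∀ t ∈ [0, 1, m], t ∈ [i + s, j + s, k + s] := by
  revert i j k m
  decide

lemma collinear3_self_apply_iterate {F : Pt K → Pt K}
    (hF : ∀ {a b c}, Collinear3 a b c → Collinear3 (F a) (F b) (F c))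
    {a : Pt K} (ha : Function.IsPeriodicPt F 4 a) (i j k : Fin 4)
    (hij : i ≠ j) (hik : i ≠ k) (hjk : j ≠ k)
    (h : Collinear3 (F^[i] a) (F^[j] a) (F^[k] a)) (m : Fin 4) :
    Collinear3 a (F a) (F^[m] a) := by
  have hshift : ∀ s t : Fin 4, F^[s] (F^[t] a) = F^[(t + s : Fin 4)] a := fun s t => by
    rw [← Function.iterate_add_apply, Fin.val_add, ha.iterate_mod_apply, add_comm]
  obtain ⟨s, hs⟩ := Fin.exists_add_cover_of_ne i j k m hij hik hjk
  have hrot := Collinear3.iterate hF s h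
  rw [hshift, hshift, hshift] at hrot
  have hmem : ∀ t ∈ [0, 1, m], F^[t] a ∈ ({F^[(i + s : Fin 4)] a, F^[(j + s : Fin 4)] a,
      F^[(k + s : Fin 4)] a} : Set (Pt K)) := by
    intro t ht
    obtain rfl | rfl | rfl : t = i + s ∨ t = j + s ∨ t = k + s := by simpa using hs t ht
    all_goals simp
  simpa using hrot.of_mem (hmem 0 (by simp)) (hmem 1 (by simp)) (hmem m (by simp))

theorem stmt_8_general (p n : ℕ) [Fact p.Prime] (a : Pt (Kbar p n))
    (h4 : (Frob (p ^ n))^[4] a = a)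
    (horb : ∀ i, 0 < i → i < 4 → (Frob (p ^ n))^[i] a ≠ a) :
    (∃ ℓ : Ln (Kbar p n), ∀ i < 4, OnLine ((Frob (p ^ n))^[i] a) ℓ) ∨
    (∀ i j k, i < 4 → j < 4 → k < 4 → i ≠ j → i ≠ k → j ≠ k →
      ¬ Collinear3 ((Frob (p ^ n))^[i] a) ((Frob (p ^ n))^[j] a) ((Frob (p ^ n))^[k] a)) := by
  refine or_iff_not_imp_right.2 fun h => ?_
  push Not at h
  obtain ⟨i, j, k, hi, hj, hk, hij, hik, hjk, hcol⟩ := h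
  have horbit := collinear3_self_apply_iterate (fun h => h.frob p n) h4 ⟨i, hi⟩ ⟨j, hj⟩ ⟨k, hk⟩
    (by simpa) (by simpa) (by simpa) hcol
  obtain ⟨ℓ, hℓ⟩ := exists_line_of_collinear3 (horb 1 one_pos (by norm_num)).symm
  exact ⟨ℓ, fun m hm => hℓ _ (horbit ⟨m, hm⟩)⟩

theorem stmt_8 (p n : ℕ) [Fact p.Prime] (hn : n ≠ 0) (a : Pt (Kbar p n))
    (h4 : (Frob (p ^ n))^[4] a = a)
    (horb : ∀ i, 0 < i → i < 4 → (Frob (p ^ n))^[i] a ≠ a) :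
    (∃ ℓ : Ln (Kbar p n), ∀ i < 4, OnLine ((Frob (p ^ n))^[i] a) ℓ) ∨
    (∀ i j k, i < 4 → j < 4 → k < 4 → i ≠ j → i ≠ k → j ≠ k →
      ¬ Collinear3 ((Frob (p ^ n))^[i] a) ((Frob (p ^ n))^[j] a) ((Frob (p ^ n))^[k] a)) :=
  stmt_8_general p n a h4 horb
end

section
/- Let a be a point of P^2(\bar{F}_q) with Frobenius orbit {a, F(a), F^2(a)} of size exactly 3, and let p1, p2 be two distinct Frobenius-fixed points (points of P^2(F_q)). Then either a, F(a), F^2(a) lie on a common line, or no three of the five points a, F(a), F^2(a), p1, p2 are collinear. -/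
open Projectivization
open scoped LinearAlgebra.Projectivization

variable {K : Type} [Field K]

noncomputable def twist (σ : K ≃+* K) (f : (Fin 3 → K) →ₗ[K] K) : (Fin 3 → K) →ₗ[K] K where
  toFun w := σ (f (fun i => σ.symm (w i)))
  map_add' u v := by
    show σ (f fun i => σ.symm ((u + v) i)) = σ (f fun i => σ.symm (u i)) + σ (f fun i => σ.symm (v i))
    have h : (fun i => σ.symm ((u + v) i)) = (fun i => σ.symm (u i)) + (fun i => σ.symm (v i)) := by
      funext i; simp
    rw [h, map_add, map_add]
  map_smul' c w := by
    show σ (f fun i => σ.symm ((c • w) i)) = c • σ (f fun i => σ.symm (w i))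
    have h : (fun i => σ.symm ((c • w) i)) = σ.symm c • (fun i => σ.symm (w i)) := by
      funext i; simp [Pi.smul_apply, smul_eq_mul]
    rw [h, map_smul]
    simp [smul_eq_mul]

lemma twist_apply (σ : K ≃+* K) (f : (Fin 3 → K) →ₗ[K] K) (w : Fin 3 → K) :
    twist σ f w = σ (f (fun i => σ.symm (w i))) := rfl

lemma twist_ne_zero (σ : K ≃+* K) {f : (Fin 3 → K) →ₗ[K] K} (hf : f ≠ 0) : twist σ f ≠ 0 := by
  intro h
  apply hf
  refine LinearMap.ext fun v => ?_
  have h2 : twist σ f (fun i => σ (v i)) = 0 := by rw [h]; rfl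
  rw [twist_apply] at h2
  simp only [RingEquiv.symm_apply_apply] at h2
  simpa using (map_eq_zero_iff σ σ.injective).mp h2

lemma van_mk (f : (Fin 3 → K) →ₗ[K] K) (v : Fin 3 → K) (hv : v ≠ 0) (h : f v = 0) :
    f ((Projectivization.mk K v hv).rep) = 0 := by
  obtain ⟨u, hu⟩ := exists_smul_eq_mk_rep K v hv
  rw [← hu, Units.smul_def, map_smul, h, smul_zero]

lemma frob_van {q : ℕ} (hq : q ≠ 0) (σ : K ≃+* K) (hσ : ∀ c : K, σ c = c ^ q)
    (f : (Fin 3 → K) →ₗ[K] K) (P : Pt K) (h : f P.rep = 0) :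
    (twist σ f) ((Frob q P).rep) = 0 := by
  unfold Frob
  rw [dif_neg hq]
  apply van_mk
  rw [twist_apply]
  have h2 : (fun i => σ.symm (P.rep i ^ q)) = P.rep := by
    funext i; rw [← hσ, RingEquiv.symm_apply_apply]
  rw [h2, h, map_zero]

lemma merge {f g : (Fin 3 → K) →ₗ[K] K} (hf : f ≠ 0) (hg : g ≠ 0)
    {P Q S : Pt K} (hPQ : P ≠ Q)
    (hfP : f P.rep = 0) (hfQ : f Q.rep = 0) (hgP : g P.rep = 0) (hgQ : g Q.rep = 0)
    (hgS : g S.rep = 0) : f S.rep = 0 := by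
  have hli : LinearIndependent K ![P.rep, Q.rep] := by
    rw [linearIndependent_fin2]
    constructor
    · simpa using Q.rep_nonzero
    · intro c hc
      simp only [Matrix.cons_val_one, Matrix.head_cons, Matrix.cons_val_zero] at hc
      apply hPQ
      rw [← P.mk_rep, ← Q.mk_rep]
      exact (mk_eq_mk_iff' K _ _ P.rep_nonzero Q.rep_nonzero).2 ⟨c, hc⟩
  set W := Submodule.span K (Set.range ![P.rep, Q.rep]) with hW
  have hWf : W ≤ LinearMap.ker f := by
    rw [hW, Submodule.span_le]
    rintro v ⟨i, rfl⟩
    fin_cases i <;> simpa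
  have hWg : W ≤ LinearMap.ker g := by
    rw [hW, Submodule.span_le]
    rintro v ⟨i, rfl⟩
    fin_cases i <;> simpa
  have hrW : Module.finrank K W = 2 := by
    rw [hW, finrank_span_eq_card hli]
    simp
  have hkg : Module.finrank K (LinearMap.ker g) = 2 := by
    have h1 : LinearMap.range g = ⊤ := by
      rcases eq_bot_or_eq_top (LinearMap.range g) with h | h
      · exact absurd (LinearMap.range_eq_bot.mp h) hg
      · exact h
    have h2 := LinearMap.finrank_range_add_finrank_ker g
    rw [h1] at h2
    simp only [finrank_top] at h2
    have h3 : Module.finrank K (Fin 3 → K) = 3 := by simp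
    have h4 : Module.finrank K K = 1 := Module.finrank_self K
    omega
  have hEq : W = LinearMap.ker g :=
    Submodule.eq_of_le_of_finrank_le hWg (by rw [hkg, hrW])
  exact hWf (hEq ▸ LinearMap.mem_ker.2 hgS) 

lemma i2 {q : ℕ} (b : Pt K) : (Frob q)^[2] b = Frob q (Frob q b) := rfl

lemma e3' {q : ℕ} (a : Pt K) (ha3 : (Frob q)^[3] a = a) :
    Frob q (Frob q (Frob q a)) = a := ha3

lemma conj_ne {q : ℕ} (a : Pt K) (ha3 : (Frob q)^[3] a = a) (ha1 : Frob q a ≠ a)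
    (ha2 : (Frob q)^[2] a ≠ a) : Frob q a ≠ (Frob q)^[2] a := by
  intro h
  rw [i2] at h
  have h2 := congrArg (Frob q) (congrArg (Frob q) h)
  rw [e3' a ha3] at h2
  exact ha1 h2.symm

lemma fixed_ne {q : ℕ} (a z : Pt K) (ha3 : (Frob q)^[3] a = a) (ha1 : Frob q a ≠ a)
    (ha2 : (Frob q)^[2] a ≠ a) (hz : Frob q z = z) :
    z ≠ a ∧ z ≠ Frob q a ∧ z ≠ (Frob q)^[2] a := by
  refine ⟨fun h => ha1 ?_, fun h => conj_ne a ha3 ha1 ha2 ?_, fun h => ha2 ?_⟩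
  · rw [← h]; exact hz
  · rw [i2]
    exact (by rw [← h]; exact hz : Frob q (Frob q a) = Frob q a).symm
  · have h1 : Frob q ((Frob q)^[2] a) = (Frob q)^[2] a := by rw [← h]; exact hz
    have h2 : Frob q ((Frob q)^[2] a) = a := by rw [i2]; exact e3' a ha3
    exact h1.symm.trans h2

lemma L1 {q : ℕ} (hq : q ≠ 0) (σ : K ≃+* K) (hσ : ∀ c : K, σ c = c ^ q)
    (a c z w : Pt K) (ha3 : (Frob q)^[3] a = a)
    (hc : c = a ∨ c = Frob q a ∨ c = (Frob q)^[2] a)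
    (hz : Frob q z = z) (hw : Frob q w = w) (hzw : z ≠ w)
    (f : (Fin 3 → K) →ₗ[K] K) (hf : f ≠ 0)
    (h1 : f c.rep = 0) (h2 : f z.rep = 0) (h3 : f w.rep = 0) :
    Collinear3 a (Frob q a) ((Frob q)^[2] a) := by
  have hg : twist σ f ≠ 0 := twist_ne_zero σ hf
  have hgc := frob_van hq σ hσ f c h1
  have hgz : twist σ f z.rep = 0 := by have := frob_van hq σ hσ f z h2; rwa [hz] at this
  have hgw : twist σ f w.rep = 0 := by have := frob_van hq σ hσ f w h3; rwa [hw] at this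
  have h4 : f (Frob q c).rep = 0 := merge hf hg hzw h2 h3 hgz hgw hgc
  have hh : twist σ (twist σ f) ≠ 0 := twist_ne_zero σ hg
  have hhc := frob_van hq σ hσ (twist σ f) (Frob q c) hgc
  have hhz : twist σ (twist σ f) z.rep = 0 := by
    have := frob_van hq σ hσ (twist σ f) z hgz; rwa [hz] at this
  have hhw : twist σ (twist σ f) w.rep = 0 := by
    have := frob_van hq σ hσ (twist σ f) w hgw; rwa [hw] at this
  have h5 : f (Frob q (Frob q c)).rep = 0 := merge hf hh hzw h2 h3 hhz hhw hhc
  rcases hc with h | h | h <;> rw [h] at h1 h4 h5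
  · exact ⟨f, hf, h1, h4, by rw [i2 a]; exact h5⟩
  · rw [e3' a ha3] at h5
    exact ⟨f, hf, h5, h1, by rw [i2 a]; exact h4⟩
  · rw [i2 a] at h4 h5
    rw [e3' a ha3] at h4 h5
    exact ⟨f, hf, h4, h5, h1⟩

lemma L2 {q : ℕ} (hq : q ≠ 0) (σ : K ≃+* K) (hσ : ∀ c : K, σ c = c ^ q)
    (a c d z : Pt K) (ha3 : (Frob q)^[3] a = a) (ha1 : Frob q a ≠ a)
    (ha2 : (Frob q)^[2] a ≠ a)
    (hc : c = a ∨ c = Frob q a ∨ c = (Frob q)^[2] a)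
    (hd : d = a ∨ d = Frob q a ∨ d = (Frob q)^[2] a)
    (hcd : c ≠ d) (hz : Frob q z = z)
    (f : (Fin 3 → K) →ₗ[K] K) (hf : f ≠ 0)
    (h1 : f c.rep = 0) (h2 : f d.rep = 0) (h3 : f z.rep = 0) :
    Collinear3 a (Frob q a) ((Frob q)^[2] a) := by
  obtain ⟨hza, hzb, hzc⟩ := fixed_ne a z ha3 ha1 ha2 hz
  have hg : twist σ f ≠ 0 := twist_ne_zero σ hf
  have hgz : twist σ f z.rep = 0 := by have := frob_van hq σ hσ f z h3; rwa [hz] at this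
  have hgc := frob_van hq σ hσ f c h1
  have hgd := frob_van hq σ hσ f d h2
  rcases hc with h | h | h <;> rcases hd with h' | h' | h' <;>
    rw [h] at h1 hgc hcd <;> rw [h'] at h2 hgd hcd
  · exact absurd rfl hcd
  · -- c = a, d = Fa
    have h4 : f (Frob q (Frob q a)).rep = 0 := merge hf hg hzb.symm h2 h3 hgc hgz hgd
    exact ⟨f, hf, h1, h2, by rw [i2 a]; exact h4⟩
  · -- c = a, d = F²a
    rw [i2 a, e3' a ha3] at hgd
    have h4 : f (Frob q a).rep = 0 := merge hf hg hza.symm h1 h3 hgd hgz hgc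
    exact ⟨f, hf, h1, h4, h2⟩
  · -- c = Fa, d = a
    have h4 : f (Frob q (Frob q a)).rep = 0 := merge hf hg hzb.symm h1 h3 hgd hgz hgc
    exact ⟨f, hf, h2, h1, by rw [i2 a]; exact h4⟩
  · exact absurd rfl hcd
  · -- c = Fa, d = F²a
    rw [i2 a, e3' a ha3] at hgd
    rw [← i2 a] at hgc
    have h4 : f a.rep = 0 := merge hf hg hzc.symm h2 h3 hgc hgz hgd
    exact ⟨f, hf, h4, h1, h2⟩
  · -- c = F²a, d = a
    rw [i2 a, e3' a ha3] at hgc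
    have h4 : f (Frob q a).rep = 0 := merge hf hg hza.symm h2 h3 hgc hgz hgd
    exact ⟨f, hf, h2, h4, h1⟩
  · -- c = F²a, d = Fa
    rw [i2 a, e3' a ha3] at hgc
    rw [← i2 a] at hgd
    have h4 : f a.rep = 0 := merge hf hg hzc.symm h1 h3 hgd hgz hgc
    exact ⟨f, hf, h4, h2, h1⟩
  · exact absurd rfl hcd

theorem stmt_10 (p n : ℕ) [Fact p.Prime] (hn : n ≠ 0) (a x y : Pt (Kbar p n))
    (ha3 : (Frob (p ^ n))^[3] a = a) (ha1 : Frob (p ^ n) a ≠ a) (ha2 : (Frob (p ^ n))^[2] a ≠ a)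
    (hx : Frob (p ^ n) x = x) (hy : Frob (p ^ n) y = y) (hxy : x ≠ y) :
    Collinear3 a (Frob (p ^ n) a) ((Frob (p ^ n))^[2] a) ∨
    (∀ i j k : Fin 5, i ≠ j → i ≠ k → j ≠ k →
      ¬ Collinear3 (![a, Frob (p ^ n) a, (Frob (p ^ n))^[2] a, x, y] i)
        (![a, Frob (p ^ n) a, (Frob (p ^ n))^[2] a, x, y] j)
        (![a, Frob (p ^ n) a, (Frob (p ^ n))^[2] a, x, y] k)) := by
  by_cases H : Collinear3 a (Frob (p ^ n) a) ((Frob (p ^ n))^[2] a)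
  · exact Or.inl H
  right
  have hp : p.Prime := Fact.out
  set q := p ^ n with hqdef
  have hq : q ≠ 0 := pow_ne_zero n hp.ne_zero
  set σ : Kbar p n ≃+* Kbar p n := iterateFrobeniusEquiv (Kbar p n) p n with hσdef
  have hσ : ∀ c : Kbar p n, σ c = c ^ q := fun c => iterateFrobeniusEquiv_def (Kbar p n) p n c
  have nab : a ≠ Frob q a := fun h' => ha1 h'.symm
  have nac : a ≠ (Frob q)^[2] a := fun h' => ha2 h'.symm
  have nbc : Frob q a ≠ (Frob q)^[2] a := conj_ne a ha3 ha1 ha2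
  have ncb := nbc.symm
  obtain ⟨nxa, nxb, nxc⟩ := fixed_ne a x ha3 ha1 ha2 hx
  obtain ⟨nya, nyb, nyc⟩ := fixed_ne a y ha3 ha1 ha2 hy
  have nax := nxa.symm; have nbx := nxb.symm; have ncx := nxc.symm
  have nay := nya.symm; have nby := nyb.symm; have ncy := nyc.symm
  have hyx := hxy.symm
  have hne : ∀ i j : Fin 5, i ≠ j →
      ![a, Frob q a, (Frob q)^[2] a, x, y] i ≠ ![a, Frob q a, (Frob q)^[2] a, x, y] j := by
    intro i j hij
    fin_cases i <;> fin_cases j <;> simp_all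
  have hmem : ∀ i : Fin 5, ![a, Frob q a, (Frob q)^[2] a, x, y] i = a ∨
      ![a, Frob q a, (Frob q)^[2] a, x, y] i = Frob q a ∨
      ![a, Frob q a, (Frob q)^[2] a, x, y] i = (Frob q)^[2] a ∨
      ![a, Frob q a, (Frob q)^[2] a, x, y] i = x ∨
      ![a, Frob q a, (Frob q)^[2] a, x, y] i = y := by
    intro i; fin_cases i <;> simp
  have K1a : ∀ f : (Fin 3 → Kbar p n) →ₗ[Kbar p n] Kbar p n, f ≠ 0 → f a.rep = 0 →
      f x.rep = 0 → f y.rep = 0 → Collinear3 a (Frob q a) ((Frob q)^[2] a) :=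
    fun f hf h1 h2 h3 => L1 hq σ hσ a a x y ha3 (Or.inl rfl) hx hy hxy f hf h1 h2 h3
  have K1b : ∀ f : (Fin 3 → Kbar p n) →ₗ[Kbar p n] Kbar p n, f ≠ 0 → f (Frob q a).rep = 0 →
      f x.rep = 0 → f y.rep = 0 → Collinear3 a (Frob q a) ((Frob q)^[2] a) :=
    fun f hf h1 h2 h3 => L1 hq σ hσ a (Frob q a) x y ha3 (Or.inr (Or.inl rfl)) hx hy hxy f hf h1 h2 h3
  have K1c : ∀ f : (Fin 3 → Kbar p n) →ₗ[Kbar p n] Kbar p n, f ≠ 0 → f ((Frob q)^[2] a).rep = 0 →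
      f x.rep = 0 → f y.rep = 0 → Collinear3 a (Frob q a) ((Frob q)^[2] a) :=
    fun f hf h1 h2 h3 => L1 hq σ hσ a ((Frob q)^[2] a) x y ha3 (Or.inr (Or.inr rfl)) hx hy hxy f hf h1 h2 h3
  have K2ab_x : ∀ f : (Fin 3 → Kbar p n) →ₗ[Kbar p n] Kbar p n, f ≠ 0 → f a.rep = 0 →
      f (Frob q a).rep = 0 → f x.rep = 0 → Collinear3 a (Frob q a) ((Frob q)^[2] a) :=
    fun f hf h1 h2 h3 => L2 hq σ hσ a a (Frob q a) x ha3 ha1 ha2 (Or.inl rfl) (Or.inr (Or.inl rfl)) nab hx f hf h1 h2 h3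
  have K2ab_y : ∀ f : (Fin 3 → Kbar p n) →ₗ[Kbar p n] Kbar p n, f ≠ 0 → f a.rep = 0 →
      f (Frob q a).rep = 0 → f y.rep = 0 → Collinear3 a (Frob q a) ((Frob q)^[2] a) :=
    fun f hf h1 h2 h3 => L2 hq σ hσ a a (Frob q a) y ha3 ha1 ha2 (Or.inl rfl) (Or.inr (Or.inl rfl)) nab hy f hf h1 h2 h3
  have K2ac_x : ∀ f : (Fin 3 → Kbar p n) →ₗ[Kbar p n] Kbar p n, f ≠ 0 → f a.rep = 0 →
      f ((Frob q)^[2] a).rep = 0 → f x.rep = 0 → Collinear3 a (Frob q a) ((Frob q)^[2] a) :=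
    fun f hf h1 h2 h3 => L2 hq σ hσ a a ((Frob q)^[2] a) x ha3 ha1 ha2 (Or.inl rfl) (Or.inr (Or.inr rfl)) nac hx f hf h1 h2 h3
  have K2ac_y : ∀ f : (Fin 3 → Kbar p n) →ₗ[Kbar p n] Kbar p n, f ≠ 0 → f a.rep = 0 →
      f ((Frob q)^[2] a).rep = 0 → f y.rep = 0 → Collinear3 a (Frob q a) ((Frob q)^[2] a) :=
    fun f hf h1 h2 h3 => L2 hq σ hσ a a ((Frob q)^[2] a) y ha3 ha1 ha2 (Or.inl rfl) (Or.inr (Or.inr rfl)) nac hy f hf h1 h2 h3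
  have K2bc_x : ∀ f : (Fin 3 → Kbar p n) →ₗ[Kbar p n] Kbar p n, f ≠ 0 → f (Frob q a).rep = 0 →
      f ((Frob q)^[2] a).rep = 0 → f x.rep = 0 → Collinear3 a (Frob q a) ((Frob q)^[2] a) :=
    fun f hf h1 h2 h3 => L2 hq σ hσ a (Frob q a) ((Frob q)^[2] a) x ha3 ha1 ha2 (Or.inr (Or.inl rfl)) (Or.inr (Or.inr rfl)) nbc hx f hf h1 h2 h3
  have K2bc_y : ∀ f : (Fin 3 → Kbar p n) →ₗ[Kbar p n] Kbar p n, f ≠ 0 → f (Frob q a).rep = 0 →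
      f ((Frob q)^[2] a).rep = 0 → f y.rep = 0 → Collinear3 a (Frob q a) ((Frob q)^[2] a) :=
    fun f hf h1 h2 h3 => L2 hq σ hσ a (Frob q a) ((Frob q)^[2] a) y ha3 ha1 ha2 (Or.inr (Or.inl rfl)) (Or.inr (Or.inr rfl)) nbc hy f hf h1 h2 h3
  have key : ∀ u v w : Pt (Kbar p n),
      (u = a ∨ u = Frob q a ∨ u = (Frob q)^[2] a ∨ u = x ∨ u = y) →
      (v = a ∨ v = Frob q a ∨ v = (Frob q)^[2] a ∨ v = x ∨ v = y) →
      (w = a ∨ w = Frob q a ∨ w = (Frob q)^[2] a ∨ w = x ∨ w = y) →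
      u ≠ v → u ≠ w → v ≠ w → ¬ Collinear3 u v w := by
    rintro u v w hu hv hw huv huw hvw ⟨f, hf, h1, h2, h3⟩
    apply H
    rcases hu with rfl|rfl|rfl|rfl|rfl
    · rcases hv with rfl|rfl|rfl|rfl|rfl
      · rcases hw with rfl|rfl|rfl|rfl|rfl
        · exact absurd rfl huv
        · exact absurd rfl huv
        · exact absurd rfl huv
        · exact absurd rfl huv
        · exact absurd rfl huv
      · rcases hw with rfl|rfl|rfl|rfl|rfl
        · exact absurd rfl huw
        · exact absurd rfl hvw
        · exact ⟨f, hf, h1, h2, h3⟩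
        · exact K2ab_x f hf h1 h2 h3
        · exact K2ab_y f hf h1 h2 h3
      · rcases hw with rfl|rfl|rfl|rfl|rfl
        · exact absurd rfl huw
        · exact ⟨f, hf, h1, h3, h2⟩
        · exact absurd rfl hvw
        · exact K2ac_x f hf h1 h2 h3
        · exact K2ac_y f hf h1 h2 h3
      · rcases hw with rfl|rfl|rfl|rfl|rfl
        · exact absurd rfl huw
        · exact K2ab_x f hf h1 h3 h2
        · exact K2ac_x f hf h1 h3 h2
        · exact absurd rfl hvw
        · exact K1a f hf h1 h2 h3
      · rcases hw with rfl|rfl|rfl|rfl|rfl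
        · exact absurd rfl huw
        · exact K2ab_y f hf h1 h3 h2
        · exact K2ac_y f hf h1 h3 h2
        · exact K1a f hf h1 h3 h2
        · exact absurd rfl hvw
    · rcases hv with rfl|rfl|rfl|rfl|rfl
      · rcases hw with rfl|rfl|rfl|rfl|rfl
        · exact absurd rfl hvw
        · exact absurd rfl huw
        · exact ⟨f, hf, h2, h1, h3⟩
        · exact K2ab_x f hf h2 h1 h3
        · exact K2ab_y f hf h2 h1 h3
      · rcases hw with rfl|rfl|rfl|rfl|rfl
        · exact absurd rfl huv
        · exact absurd rfl huv
        · exact absurd rfl huv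
        · exact absurd rfl huv
        · exact absurd rfl huv
      · rcases hw with rfl|rfl|rfl|rfl|rfl
        · exact ⟨f, hf, h3, h1, h2⟩
        · exact absurd rfl huw
        · exact absurd rfl hvw
        · exact K2bc_x f hf h1 h2 h3
        · exact K2bc_y f hf h1 h2 h3
      · rcases hw with rfl|rfl|rfl|rfl|rfl
        · exact K2ab_x f hf h3 h1 h2
        · exact absurd rfl huw
        · exact K2bc_x f hf h1 h3 h2
        · exact absurd rfl hvw
        · exact K1b f hf h1 h2 h3
      · rcases hw with rfl|rfl|rfl|rfl|rfl
        · exact K2ab_y f hf h3 h1 h2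
        · exact absurd rfl huw
        · exact K2bc_y f hf h1 h3 h2
        · exact K1b f hf h1 h3 h2
        · exact absurd rfl hvw
    · rcases hv with rfl|rfl|rfl|rfl|rfl
      · rcases hw with rfl|rfl|rfl|rfl|rfl
        · exact absurd rfl hvw
        · exact ⟨f, hf, h2, h3, h1⟩
        · exact absurd rfl huw
        · exact K2ac_x f hf h2 h1 h3
        · exact K2ac_y f hf h2 h1 h3
      · rcases hw with rfl|rfl|rfl|rfl|rfl
        · exact ⟨f, hf, h3, h2, h1⟩
        · exact absurd rfl hvw
        · exact absurd rfl huw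
        · exact K2bc_x f hf h2 h1 h3
        · exact K2bc_y f hf h2 h1 h3
      · rcases hw with rfl|rfl|rfl|rfl|rfl
        · exact absurd rfl huv
        · exact absurd rfl huv
        · exact absurd rfl huv
        · exact absurd rfl huv
        · exact absurd rfl huv
      · rcases hw with rfl|rfl|rfl|rfl|rfl
        · exact K2ac_x f hf h3 h1 h2
        · exact K2bc_x f hf h3 h1 h2
        · exact absurd rfl huw
        · exact absurd rfl hvw
        · exact K1c f hf h1 h2 h3
      · rcases hw with rfl|rfl|rfl|rfl|rfl
        · exact K2ac_y f hf h3 h1 h2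
        · exact K2bc_y f hf h3 h1 h2
        · exact absurd rfl huw
        · exact K1c f hf h1 h3 h2
        · exact absurd rfl hvw
    · rcases hv with rfl|rfl|rfl|rfl|rfl
      · rcases hw with rfl|rfl|rfl|rfl|rfl
        · exact absurd rfl hvw
        · exact K2ab_x f hf h2 h3 h1
        · exact K2ac_x f hf h2 h3 h1
        · exact absurd rfl huw
        · exact K1a f hf h2 h1 h3
      · rcases hw with rfl|rfl|rfl|rfl|rfl
        · exact K2ab_x f hf h3 h2 h1
        · exact absurd rfl hvw
        · exact K2bc_x f hf h2 h3 h1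
        · exact absurd rfl huw
        · exact K1b f hf h2 h1 h3
      · rcases hw with rfl|rfl|rfl|rfl|rfl
        · exact K2ac_x f hf h3 h2 h1
        · exact K2bc_x f hf h3 h2 h1
        · exact absurd rfl hvw
        · exact absurd rfl huw
        · exact K1c f hf h2 h1 h3
      · rcases hw with rfl|rfl|rfl|rfl|rfl
        · exact absurd rfl huv
        · exact absurd rfl huv
        · exact absurd rfl huv
        · exact absurd rfl huv
        · exact absurd rfl huv
      · rcases hw with rfl|rfl|rfl|rfl|rfl
        · exact K1a f hf h3 h1 h2
        · exact K1b f hf h3 h1 h2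
        · exact K1c f hf h3 h1 h2
        · exact absurd rfl huw
        · exact absurd rfl hvw
    · rcases hv with rfl|rfl|rfl|rfl|rfl
      · rcases hw with rfl|rfl|rfl|rfl|rfl
        · exact absurd rfl hvw
        · exact K2ab_y f hf h2 h3 h1
        · exact K2ac_y f hf h2 h3 h1
        · exact K1a f hf h2 h3 h1
        · exact absurd rfl huw
      · rcases hw with rfl|rfl|rfl|rfl|rfl
        · exact K2ab_y f hf h3 h2 h1
        · exact absurd rfl hvw
        · exact K2bc_y f hf h2 h3 h1
        · exact K1b f hf h2 h3 h1
        · exact absurd rfl huw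
      · rcases hw with rfl|rfl|rfl|rfl|rfl
        · exact K2ac_y f hf h3 h2 h1
        · exact K2bc_y f hf h3 h2 h1
        · exact absurd rfl hvw
        · exact K1c f hf h2 h3 h1
        · exact absurd rfl huw
      · rcases hw with rfl|rfl|rfl|rfl|rfl
        · exact K1a f hf h3 h2 h1
        · exact K1b f hf h3 h2 h1
        · exact K1c f hf h3 h2 h1
        · exact absurd rfl hvw
        · exact absurd rfl huw
      · rcases hw with rfl|rfl|rfl|rfl|rfl
        · exact absurd rfl huv
        · exact absurd rfl huv
        · exact absurd rfl huv
        · exact absurd rfl huv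
        · exact absurd rfl huv
  intro i j k hij hik hjk
  exact key _ _ _ (hmem i) (hmem j) (hmem k) (hne i j hij) (hne i k hik) (hne j k hjk)
end

section
/- Let a be a point of P^2(\bar{F}_{q}) with F^7(a) = a and Frobenius orbit of size 7, where q is a power of 2. Then the orbit O(a) = {a, F(a), ..., F^6(a)} forms a Fano plane (7 points such that there are 7 lines each containing exactly 3 of the points and each point lying on exactly 3 of these lines) if and only if either {a, F(a), F^5(a)} are collinear or {a, F(a), F^3(a)} are collinear, but not both. -/
open Projectivization
open scoped LinearAlgebra.Projectivization

variable {K : Type} [Field K]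

/-- A Fano plane: 7 points together with 7 lines, with 3 of the points on each
line and 3 of the lines through each point. -/
def IsFanoPlane {K : Type} [Field K] (S : Set (Pt K)) : Prop :=
  S.ncard = 7 ∧ ∃ L : Set (Ln K), L.ncard = 7 ∧
    (∀ ℓ ∈ L, {x ∈ S | OnLine x ℓ}.ncard = 3) ∧
    (∀ x ∈ S, {ℓ ∈ L | OnLine x ℓ}.ncard = 3)

/-!
Index the orbit by `ZMod 7`, `p i = F^[i] a`. The seven points are distinct, and `F` is induced by
the field endomorphism `x ↦ x ^ q`, so it maps collinear triples to collinear triples: collinearity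
among the `p i` is invariant under `i ↦ i + 1`. As two distinct points span a unique line, a
collinear triple propagates along its translates; this way `{0, 1, m}` with `m ∈ {2, 4, 6}` forces
`{0, 1, 3}` or `{0, 1, 5}` to be collinear, and `{0, 1, 3}` together with `{0, 1, 5}` puts all
seven points on one line.

If `{0, 1, 3}` is collinear and `{0, 1, 5}` is not, the line through `p 0` and `p 1` meets the
orbit exactly in `{0, 1, 3}`, so the line through `p j` and `p (j + 1)` contains `p m` iff
`m - j ∈ {0, 1, 3}`. As `{0, 1, 3}` is a perfect difference set modulo 7, these seven lines make
the orbit a Fano plane. The case of `{0, 1, 5}` is the mirror image under `i ↦ -i`. Conversely, in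
a Fano plane the line through `p 0` and `p 1` has a third orbit point but not all seven.
-/

open Function Set

lemma apply_rep_mk_eq_zero_iff {V W : Type*} [AddCommGroup V] [Module K V] [AddCommGroup W]
    [Module K W] (f : V →ₗ[K] W) {v : V} (hv : v ≠ 0) : f (mk K v hv).rep = 0 ↔ f v = 0 := by
  obtain ⟨c, hc⟩ := exists_smul_eq_mk_rep K v hv
  rw [← hc, Units.smul_def, map_smul, smul_eq_zero]
  simp

lemma onLine_mk_iff (x : Pt K) {f : (Fin 3 → K) →ₗ[K] K} (hf : f ≠ 0) :
    OnLine x (mk K f hf) ↔ f x.rep = 0 :=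
  apply_rep_mk_eq_zero_iff (LinearMap.applyₗ x.rep) hf

lemma ker_eq_span_rep {f : (Fin 3 → K) →ₗ[K] K} (hf : f ≠ 0) {x y : Pt K} (hxy : x ≠ y)
    (hx : f x.rep = 0) (hy : f y.rep = 0) :
    LinearMap.ker f = Submodule.span K (range (Projectivization.rep ∘ ![x, y])) := by
  have hle : Submodule.span K (range (Projectivization.rep ∘ ![x, y])) ≤ LinearMap.ker f := by
    rw [Submodule.span_le, range_subset_iff]
    intro i
    fin_cases i <;> assumption
  refine (Submodule.eq_of_le_of_finrank_le hle ?_).symm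
  have hind := (independent_iff.mp ((independent_pair_iff_ne x y).mpr hxy))
  have hlt := Submodule.finrank_lt (LinearMap.ker_eq_top.not.mpr hf)
  rw [finrank_span_eq_card hind, Fintype.card_fin]
  simp only [Module.finrank_fin_fun] at hlt
  omega

lemma Collinear3.swap {x y z : Pt K} (h : Collinear3 x y z) : Collinear3 y x z :=
  let ⟨f, hf, hx, hy, hz⟩ := h; ⟨f, hf, hy, hx, hz⟩

lemma Collinear3.rotate {x y z : Pt K} (h : Collinear3 x y z) : Collinear3 y z x :=
  let ⟨f, hf, hx, hy, hz⟩ := h; ⟨f, hf, hy, hz, hx⟩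

lemma Collinear3.apply_rep_eq_zero {x y z : Pt K} (h : Collinear3 x y z) (hxy : x ≠ y)
    {f : (Fin 3 → K) →ₗ[K] K} (hf : f ≠ 0) (hx : f x.rep = 0) (hy : f y.rep = 0) :
    f z.rep = 0 := by
  obtain ⟨g, hg, hgx, hgy, hgz⟩ := h
  have hz : z.rep ∈ LinearMap.ker g := hgz
  rwa [ker_eq_span_rep hg hxy hgx hgy, ← ker_eq_span_rep hf hxy hx hy] at hz

lemma eq_of_onLine {x y : Pt K} (hxy : x ≠ y) {ℓ ℓ' : Ln K} (hx : OnLine x ℓ) (hy : OnLine y ℓ)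
    (hx' : OnLine x ℓ') (hy' : OnLine y ℓ') : ℓ = ℓ' := by
  have hker : LinearMap.ker ℓ'.rep ≤ LinearMap.ker ℓ.rep := by
    rw [ker_eq_span_rep ℓ.rep_nonzero hxy hx hy, ker_eq_span_rep ℓ'.rep_nonzero hxy hx' hy']
  obtain ⟨c, hc⟩ := Submodule.mem_span_singleton.mp
    (by simpa using mem_span_of_iInf_ker_le_ker (ι := Unit) (L := fun _ => ℓ'.rep) (by simpa))
  rw [← ℓ.mk_rep, ← ℓ'.mk_rep, mk_eq_mk_iff']
  exact ⟨c, hc⟩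

noncomputable def formMap {ι L : Type*} [Fintype ι] [DecidableEq ι] [Field L] (σ : K →+* L)
    (f : (ι → K) →ₗ[K] K) : (ι → L) →ₗ[L] L :=
  dotProductEquiv L ι fun i => σ ((dotProductEquiv K ι).symm f i)

lemma formMap_apply_map {ι L : Type*} [Fintype ι] [DecidableEq ι] [Field L] (σ : K →+* L)
    (f : (ι → K) →ₗ[K] K) (v : ι → K) : formMap σ f (fun i => σ (v i)) = σ (f v) := by
  obtain ⟨c, rfl⟩ := (dotProductEquiv K ι).surjective f
  simp [formMap, RingHom.map_dotProduct, Function.comp_def]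

lemma formMap_ne_zero {ι L : Type*} [Fintype ι] [DecidableEq ι] [Field L] (σ : K →+* L)
    {f : (ι → K) →ₗ[K] K} (hf : f ≠ 0) : formMap σ f ≠ 0 := by
  refine fun h => hf (LinearMap.ext fun v => σ.injective ?_)
  rw [← formMap_apply_map, h, LinearMap.zero_apply, LinearMap.zero_apply, map_zero]

lemma apply_rep_frob_eq_zero_iff {q : ℕ} (hq : q ≠ 0) (f : (Fin 3 → K) →ₗ[K] K) (x : Pt K) :
    f (Frob q x).rep = 0 ↔ f (fun i => x.rep i ^ q) = 0 := by
  rw [Frob, dif_neg hq]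
  exact apply_rep_mk_eq_zero_iff f _

lemma Collinear3.frob_s11 (p : ℕ) [ExpChar K p] (n : ℕ) {x y z : Pt K} (h : Collinear3 x y z) :
    Collinear3 (Frob (p ^ n) x) (Frob (p ^ n) y) (Frob (p ^ n) z) := by
  obtain ⟨f, hf, hx, hy, hz⟩ := h
  have hq : p ^ n ≠ 0 := pow_ne_zero n (expChar_pos K p).ne'
  have key (w : Pt K) (hw : f w.rep = 0) :
      formMap (iterateFrobenius K p n) f (Frob (p ^ n) w).rep = 0 := by
    rw [apply_rep_frob_eq_zero_iff hq]
    simpa [hw, iterateFrobenius_def, zero_pow hq] using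
      formMap_apply_map (iterateFrobenius K p n) f w.rep
  exact ⟨_, formMap_ne_zero _ hf, key x hx, key y hy, key z hz⟩

lemma ncard_sep_range_eq {α β : Type*} {p : α → β} (hp : Injective p) (P : β → Prop) :
    {x ∈ range p | P x}.ncard = {a | P (p a)}.ncard := by
  change (range p ∩ {x | P x}).ncard = _
  rw [← image_preimage_eq_range_inter, ncard_image_of_injective _ hp]
  rfl

lemma isFanoPlane_range_of_incidence {p : ZMod 7 → Pt K} (hp : Injective p) {ℓ : ZMod 7 → Ln K}
    (h : ∀ m j, OnLine (p m) (ℓ j) ↔ m - j ∈ ({0, 1, 3} : Finset (ZMod 7))) :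
    IsFanoPlane (range p) := by
  have hℓ : Injective ℓ := by
    intro j j' hjj'
    have hj := (h j j').1 (hjj' ▸ (h j j).2 (by simp))
    have hj1 := (h (j + 1) j').1 (hjj' ▸ (h (j + 1) j).2 (by simp))
    rw [add_sub_right_comm] at hj1
    exact sub_eq_zero.1 ((by decide : ∀ d : ZMod 7, d ∈ ({0, 1, 3} : Finset (ZMod 7)) →
      d + 1 ∈ ({0, 1, 3} : Finset (ZMod 7)) → d = 0) _ hj hj1)
  refine ⟨by rw [ncard_range_of_injective hp, Nat.card_zmod], range ℓ,
    by rw [ncard_range_of_injective hℓ, Nat.card_zmod], ?_, ?_⟩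
  · rintro _ ⟨j, rfl⟩
    rw [ncard_sep_range_eq hp]
    have : {m | OnLine (p m) (ℓ j)} = Equiv.subRight j ⁻¹' ↑({0, 1, 3} : Finset (ZMod 7)) := by
      ext m; exact h m j
    rw [this, ncard_preimage_of_injective_subset_range (Equiv.injective _) (by simp),
      ncard_coe_finset]
    rfl
  · rintro _ ⟨m, rfl⟩
    rw [ncard_sep_range_eq hℓ]
    have : {j | OnLine (p m) (ℓ j)} = Equiv.subLeft m ⁻¹' ↑({0, 1, 3} : Finset (ZMod 7)) := by
      ext j; exact h m j
    rw [this, ncard_preimage_of_injective_subset_range (Equiv.injective _) (by simp),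
      ncard_coe_finset]
    rfl

lemma exists_onLine_of_fano {S : Set (Pt K)} {L : Set (Ln K)} (hS : S.ncard = 7)
    (hline : ∀ ℓ ∈ L, {x ∈ S | OnLine x ℓ}.ncard = 3)
    (hpoint : ∀ x ∈ S, {ℓ ∈ L | OnLine x ℓ}.ncard = 3) {x y : Pt K} (hx : x ∈ S) (hy : y ∈ S)
    (hxy : x ≠ y) : ∃ ℓ ∈ L, OnLine x ℓ ∧ OnLine y ℓ := by
  -- Otherwise the three lines through `x` carry six further points, distinct since two lines
  -- meet at most once, inside `S \ {x, y}`, which has only five.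
  by_contra! hno
  have hSfin : S.Finite := finite_of_ncard_ne_zero (by omega)
  obtain ⟨ℓ₁, ℓ₂, ℓ₃, h₁₂, h₁₃, h₂₃, hA⟩ := ncard_eq_three.mp (hpoint x hx)
  set A := {ℓ ∈ L | OnLine x ℓ}
  let T : Ln K → Set (Pt K) := fun ℓ => {z ∈ S | OnLine z ℓ} \ {x}
  have hTfin (ℓ : Ln K) : (T ℓ).Finite := (hSfin.subset (sep_subset _ _)).sdiff
  have hT (ℓ : Ln K) (hℓ : ℓ ∈ A) : (T ℓ).ncard = 2 := by
    rw [ncard_sdiff_singleton_of_mem (show x ∈ {z ∈ S | OnLine z ℓ} from ⟨hx, hℓ.2⟩),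
      hline ℓ hℓ.1]
  have hdisj (ℓ ℓ' : Ln K) (hℓ : ℓ ∈ A) (hℓ' : ℓ' ∈ A) (hne : ℓ ≠ ℓ') : Disjoint (T ℓ) (T ℓ') :=
    disjoint_left.2 fun _ ⟨⟨_, hz⟩, hzx⟩ ⟨⟨_, hz'⟩, _⟩ =>
      hne (eq_of_onLine (Ne.symm hzx) hℓ.2 hz hℓ'.2 hz')
  have hsub (ℓ : Ln K) (hℓ : ℓ ∈ A) : T ℓ ⊆ S \ {x, y} := by
    rintro z ⟨⟨hzS, hz⟩, hzx⟩
    refine ⟨hzS, ?_⟩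
    rintro (rfl | rfl)
    exacts [hzx rfl, hno ℓ hℓ.1 hℓ.2 hz]
  have h₁ : ℓ₁ ∈ A := by simp [hA]
  have h₂ : ℓ₂ ∈ A := by simp [hA]
  have h₃ : ℓ₃ ∈ A := by simp [hA]
  have hcount := ncard_le_ncard
    (union_subset (union_subset (hsub ℓ₁ h₁) (hsub ℓ₂ h₂)) (hsub ℓ₃ h₃)) hSfin.sdiff
  have hxyS := ncard_sdiff_add_ncard_of_subset (pair_subset hx hy) hSfin
  rw [ncard_union_eq (disjoint_union_left.2 ⟨hdisj _ _ h₁ h₃ h₁₃, hdisj _ _ h₂ h₃ h₂₃⟩)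
      ((hTfin _).union (hTfin _)) (hTfin _),
    ncard_union_eq (hdisj _ _ h₁ h₂ h₁₂) (hTfin _) (hTfin _), hT _ h₁, hT _ h₂, hT _ h₃] at hcount
  rw [ncard_pair hxy, hS] at hxyS
  omega

structure IsCyclicHeptagon (p : ZMod 7 → Pt K) : Prop where
  injective : Injective p
  collinear3_add_one {i j k : ZMod 7} :
    Collinear3 (p i) (p j) (p k) → Collinear3 (p (i + 1)) (p (j + 1)) (p (k + 1))

namespace IsCyclicHeptagon

variable {p : ZMod 7 → Pt K} (hp : IsCyclicHeptagon p)
include hp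

lemma collinear3_add {i j k : ZMod 7} (h : Collinear3 (p i) (p j) (p k)) (s : ZMod 7) :
    Collinear3 (p (i + s)) (p (j + s)) (p (k + s)) := by
  rw [← ZMod.natCast_zmod_val s]
  induction s.val with
  | zero => simpa using h
  | succ n ih => simpa only [Nat.cast_succ, ← add_assoc] using hp.collinear3_add_one ih

lemma collinear3_of_add {i j k : ZMod 7} (h : Collinear3 (p i) (p j) (p k)) (s : ZMod 7)
    {i' j' k' : ZMod 7} (hi : i + s = i' := by decide) (hj : j + s = j' := by decide)
    (hk : k + s = k' := by decide) : Collinear3 (p i') (p j') (p k') := by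
  subst hi hj hk
  exact hp.collinear3_add h s

lemma comp_neg : IsCyclicHeptagon fun i => p (-i) where
  injective := hp.injective.comp neg_injective
  collinear3_add_one h := hp.collinear3_of_add h (-1) (by ring) (by ring) (by ring)

lemma apply_rep_eq_zero {f : (Fin 3 → K) →ₗ[K] K} (hf : f ≠ 0) {i j k : ZMod 7}
    (h : Collinear3 (p i) (p j) (p k)) (hi : f (p i).rep = 0) (hj : f (p j).rep = 0)
    (hij : i ≠ j := by decide) : f (p k).rep = 0 :=
  h.apply_rep_eq_zero (hp.injective.ne hij) hf hi hj

lemma mem_of_collinear3_zero_one (h3 : Collinear3 (p 0) (p 1) (p 3))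
    (h5 : ¬Collinear3 (p 0) (p 1) (p 5)) {m : ZMod 7} (hm : Collinear3 (p 0) (p 1) (p m)) :
    m ∈ ({0, 1, 3} : Finset (ZMod 7)) := by
  obtain ⟨f, hf, h0, h1, hm⟩ := hm
  by_contra hm'
  refine h5 ⟨f, hf, h0, h1, ?_⟩
  have h124 : Collinear3 (p 1) (p 2) (p 4) := hp.collinear3_of_add h3 1
  have h450 : Collinear3 (p 4) (p 5) (p 0) := hp.collinear3_of_add h3 4
  have h561 : Collinear3 (p 5) (p 6) (p 1) := hp.collinear3_of_add h3 5
  obtain rfl | rfl | rfl | rfl := (by decide : ∀ m : ZMod 7, m ∉ ({0, 1, 3} : Finset (ZMod 7)) →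
    m = 2 ∨ m = 4 ∨ m = 5 ∨ m = 6) m hm'
  · exact hp.apply_rep_eq_zero hf h450.rotate.rotate h0 (hp.apply_rep_eq_zero hf h124 h1 hm)
  · exact hp.apply_rep_eq_zero hf h450.rotate.rotate h0 hm
  · exact hm
  · exact hp.apply_rep_eq_zero hf h561.rotate hm h1

lemma collinear3_three_or_five {m : ZMod 7} (hm : Collinear3 (p 0) (p 1) (p m)) (hm0 : m ≠ 0)
    (hm1 : m ≠ 1) : Collinear3 (p 0) (p 1) (p 3) ∨ Collinear3 (p 0) (p 1) (p 5) := by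
  have ⟨f, hf, h0, h1, hfm⟩ := hm
  obtain rfl | rfl | rfl | rfl | rfl := (by decide : ∀ m : ZMod 7, m ≠ 0 → m ≠ 1 →
    m = 2 ∨ m = 3 ∨ m = 4 ∨ m = 5 ∨ m = 6) m hm0 hm1
  · have h123 : Collinear3 (p 1) (p 2) (p 3) := hp.collinear3_of_add hm 1
    exact Or.inl ⟨f, hf, h0, h1, hp.apply_rep_eq_zero hf h123 h1 hfm⟩
  · exact Or.inl hm
  · have h340 : Collinear3 (p 3) (p 4) (p 0) := hp.collinear3_of_add hm 3
    exact Or.inl ⟨f, hf, h0, h1, hp.apply_rep_eq_zero hf h340.rotate hfm h0⟩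
  · exact Or.inr hm
  · have h605 : Collinear3 (p 6) (p 0) (p 5) := hp.collinear3_of_add hm 6
    exact Or.inr ⟨f, hf, h0, h1, hp.apply_rep_eq_zero hf h605 hfm h0⟩

lemma apply_rep_eq_zero_of_collinear3_of_collinear3 {f : (Fin 3 → K) →ₗ[K] K} (hf : f ≠ 0)
    (h0 : f (p 0).rep = 0) (h1 : f (p 1).rep = 0) (h3 : Collinear3 (p 0) (p 1) (p 3))
    (h5 : Collinear3 (p 0) (p 1) (p 5)) (m : ZMod 7) : f (p m).rep = 0 := by
  have h561 : Collinear3 (p 5) (p 6) (p 1) := hp.collinear3_of_add h3 5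
  have h602 : Collinear3 (p 6) (p 0) (p 2) := hp.collinear3_of_add h3 6
  have h124 : Collinear3 (p 1) (p 2) (p 4) := hp.collinear3_of_add h3 1
  have f3 := hp.apply_rep_eq_zero hf h3 h0 h1
  have f5 := hp.apply_rep_eq_zero hf h5 h0 h1
  have f6 := hp.apply_rep_eq_zero hf h561.rotate.rotate h1 f5
  have f2 := hp.apply_rep_eq_zero hf h602 f6 h0
  have f4 := hp.apply_rep_eq_zero hf h124 h1 f2
  obtain rfl | rfl | rfl | rfl | rfl | rfl | rfl := (by decide : ∀ m : ZMod 7,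
    m = 0 ∨ m = 1 ∨ m = 2 ∨ m = 3 ∨ m = 4 ∨ m = 5 ∨ m = 6) m <;> assumption

lemma isFanoPlane_range (h3 : Collinear3 (p 0) (p 1) (p 3))
    (h5 : ¬Collinear3 (p 0) (p 1) (p 5)) : IsFanoPlane (range p) := by
  have hline (j : ZMod 7) : Collinear3 (p j) (p (j + 1)) (p (j + 3)) :=
    hp.collinear3_of_add h3 j (zero_add j) (add_comm 1 j) (add_comm 3 j)
  choose f hf hfj hfj1 hfj3 using hline
  refine isFanoPlane_range_of_incidence hp.injective
    (ℓ := fun j => Projectivization.mk K (f j) (hf j)) fun m j => ?_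
  rw [onLine_mk_iff]
  constructor
  · intro hm
    have hjm : Collinear3 (p j) (p (j + 1)) (p m) := ⟨f j, hf j, hfj j, hfj1 j, hm⟩
    exact hp.mem_of_collinear3_zero_one h3 h5
      (hp.collinear3_of_add hjm (-j) (by ring) (by ring) (by ring))
  · intro hm
    obtain rfl | rfl | rfl : m = j ∨ m = j + 1 ∨ m = j + 3 := by
      simpa [sub_eq_iff_eq_add, add_comm] using hm
    exacts [hfj _, hfj1 _, hfj3 _]

lemma xor_of_isFanoPlane (hF : IsFanoPlane (range p)) :
    Xor (Collinear3 (p 0) (p 1) (p 5)) (Collinear3 (p 0) (p 1) (p 3)) := by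
  obtain ⟨hS, L, -, hline, hpoint⟩ := hF
  have h01 : p 0 ≠ p 1 := hp.injective.ne (by decide)
  obtain ⟨ℓ, hℓL, h0, h1⟩ :=
    exists_onLine_of_fano hS hline hpoint (mem_range_self 0) (mem_range_self 1) h01
  rw [xor_comm, xor_iff_or_and_not_and]
  constructor
  · obtain ⟨_, ⟨⟨m, rfl⟩, hm⟩, hm01⟩ := exists_mem_notMem_of_ncard_lt_ncard
      (s := {p 0, p 1}) (t := {x ∈ range p | OnLine x ℓ})
      (by rw [hline ℓ hℓL, ncard_pair h01]; omega)
    exact hp.collinear3_three_or_five ⟨ℓ.rep, ℓ.rep_nonzero, h0, h1, hm⟩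
      (by rintro rfl; simp at hm01) (by rintro rfl; simp at hm01)
  · rintro ⟨h3, h5⟩
    have hall : {x ∈ range p | OnLine x ℓ} = range p :=
      sep_eq_self_iff_mem_true.2 (forall_mem_range.2
        (hp.apply_rep_eq_zero_of_collinear3_of_collinear3 ℓ.rep_nonzero h0 h1 h3 h5))
    have h3eq7 := hline ℓ hℓL
    rw [hall, hS] at h3eq7
    omega

lemma isFanoPlane_range_iff : IsFanoPlane (range p) ↔
    Xor (Collinear3 (p 0) (p 1) (p 5)) (Collinear3 (p 0) (p 1) (p 3)) := by
  refine ⟨hp.xor_of_isFanoPlane, ?_⟩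
  rintro (⟨h5, h3⟩ | ⟨h3, h5⟩)
  · rw [← neg_surjective.range_comp p]
    refine hp.comp_neg.isFanoPlane_range ?_ fun h => h3 ?_
    · exact (hp.collinear3_of_add h5 6 : Collinear3 (p (-1)) (p (-0)) (p (-3))).swap
    · exact (hp.collinear3_of_add h 1 : Collinear3 (p 1) (p 0) (p 3)).swap
  · exact hp.isFanoPlane_range h3 h5

end IsCyclicHeptagon

lemma isCyclicHeptagon_iterate {F : Pt K → Pt K}
    (hF : ∀ {x y z}, Collinear3 x y z → Collinear3 (F x) (F y) (F z)) {a : Pt K}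
    (h7 : IsPeriodicPt F 7 a) (h1 : F a ≠ a) : IsCyclicHeptagon fun i : ZMod 7 => F^[i.val] a where
  injective i j hij := by
    have : Fact (Nat.Prime 7) := ⟨by norm_num⟩
    have hmin : minimalPeriod F a = 7 := minimalPeriod_eq_prime h7 h1
    refine ZMod.val_injective 7 (iterate_injOn_Iio_minimalPeriod ?_ ?_ hij) <;>
      simp [hmin, ZMod.val_lt]
  collinear3_add_one {i j k} h := by
    have hsucc : ∀ m : ZMod 7, F^[(m + 1).val] a = F (F^[m.val] a) := fun m => by
      rw [ZMod.val_add, show (1 : ZMod 7).val = 1 from rfl, h7.iterate_mod_apply,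
        iterate_succ_apply']
    simpa only [hsucc] using hF h

theorem stmt_11_general (n : ℕ) (a : Pt (Kbar 2 n))
    (h7 : (Frob (2 ^ n))^[7] a = a)
    (horb : ∀ i, 0 < i → i < 7 → (Frob (2 ^ n))^[i] a ≠ a) :
    IsFanoPlane {x | ∃ i < 7, x = (Frob (2 ^ n))^[i] a} ↔
      Xor' (Collinear3 a (Frob (2 ^ n) a) ((Frob (2 ^ n))^[5] a))
           (Collinear3 a (Frob (2 ^ n) a) ((Frob (2 ^ n))^[3] a)) := by
  have hp := isCyclicHeptagon_iterate (Collinear3.frob_s11 2 n) h7 (horb 1 one_pos (by norm_num))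
  have horbit : {x | ∃ i < 7, x = (Frob (2 ^ n))^[i] a} =
      range fun i : ZMod 7 => (Frob (2 ^ n))^[i.val] a := by
    ext x
    constructor
    · rintro ⟨i, hi, rfl⟩
      exact ⟨i, by simp only [ZMod.val_natCast, Nat.mod_eq_of_lt hi]⟩
    · rintro ⟨i, rfl⟩
      exact ⟨i.val, ZMod.val_lt i, rfl⟩
  rw [horbit]
  exact hp.isFanoPlane_range_iff

theorem stmt_11 (n : ℕ) (hn : n ≠ 0) (a : Pt (Kbar 2 n))
    (h7 : (Frob (2 ^ n))^[7] a = a)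
    (horb : ∀ i, 0 < i → i < 7 → (Frob (2 ^ n))^[i] a ≠ a) :
    IsFanoPlane {x | ∃ i < 7, x = (Frob (2 ^ n))^[i] a} ↔
      Xor' (Collinear3 a (Frob (2 ^ n) a) ((Frob (2 ^ n))^[5] a))
           (Collinear3 a (Frob (2 ^ n) a) ((Frob (2 ^ n))^[3] a)) :=
  stmt_11_general n a h7 horb
end

section
/- Let a be a point of P^2(\bar{F}_q) with Frobenius orbit of size 7 (F^7(a)=a, F^i(a)≠a for 1≤i≤6). If {a, F(a), F^2(a)} are collinear, then the entire orbit {a, F(a), ..., F^6(a)} lies on a single line, and that line is defined over F_q. -/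
open Projectivization
open scoped LinearAlgebra.Projectivization

variable {K : Type} [Field K]

open Module Submodule

/-- Vanishing of a linear form at a representative is scale-invariant. -/
lemma vanish_rep_iff (f : (Fin 3 → K) →ₗ[K] K) (v : Fin 3 → K) (hv : v ≠ 0) :
    f (Projectivization.mk K v hv).rep = 0 ↔ f v = 0 := by
  have h := (Projectivization.mk_rep (Projectivization.mk K v hv))
  rw [Projectivization.mk_eq_mk_iff] at h
  obtain ⟨c, hc⟩ := h
  rw [← hc, Units.smul_def, map_smul, smul_eq_mul]
  simp

/-- Two nonzero forms vanishing at two distinct projective points are proportional. -/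
lemma twoper (u v : Fin 3 → K) (hu : u ≠ 0) (hv : v ≠ 0)
    (hne : Projectivization.mk K u hu ≠ Projectivization.mk K v hv)
    (f g : (Fin 3 → K) →ₗ[K] K) (hf : f ≠ 0) (hg : g ≠ 0)
    (hfu : f u = 0) (hfv : f v = 0) (hgu : g u = 0) (hgv : g v = 0) :
    ∃ c : K, g = c • f := by
  have hli : LinearIndependent K ![u, v] := by
    rw [linearIndependent_fin2]
    refine ⟨by simpa using hv, fun a ha => ?_⟩
    apply hne
    rw [Projectivization.mk_eq_mk_iff]
    have hane : a ≠ 0 := by rintro rfl; simp at ha; exact hu ha.symm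
    exact ⟨Units.mk0 a hane, by simpa using ha⟩
  set W : Submodule K (Fin 3 → K) := Submodule.span K (Set.range ![u, v]) with hW
  have hWrank : finrank K W = 2 := by
    have := finrank_span_eq_card (R := K) hli
    rw [hW]; simpa using this
  have hArank : finrank K W.dualAnnihilator = 1 := by
    have e : finrank K ((Fin 3 → K) ⧸ W) = finrank K W.dualAnnihilator :=
      (Subspace.quotEquivAnnihilator W).finrank_eq
    have h3 : finrank K (Fin 3 → K) = 3 := Module.finrank_fin_fun K
    have := Submodule.finrank_quotient_add_finrank W
    omega
  have hfA : f ∈ W.dualAnnihilator := by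
    rw [Submodule.mem_dualAnnihilator]
    intro w hw
    induction hw using Submodule.span_induction with
    | mem x hx =>
        obtain ⟨i, rfl⟩ := hx
        fin_cases i <;> simpa
    | zero => simp
    | add x y _ _ hx hy => simp [hx, hy]
    | smul a x _ hx => simp [hx]
  have hgA : g ∈ W.dualAnnihilator := by
    rw [Submodule.mem_dualAnnihilator]
    intro w hw
    induction hw using Submodule.span_induction with
    | mem x hx =>
        obtain ⟨i, rfl⟩ := hx
        fin_cases i <;> simpa
    | zero => simp
    | add x y _ _ hx hy => simp [hx, hy]
    | smul a x _ hx => simp [hx]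
  by_contra hc
  push_neg at hc
  have hli2 : LinearIndependent K ![g, f] := by
    rw [linearIndependent_fin2]
    refine ⟨by simpa using hf, fun a ha => hc a ?_⟩
    simpa using ha.symm
  have hle : Submodule.span K (Set.range ![g, f]) ≤ W.dualAnnihilator := by
    rw [Submodule.span_le]
    rintro x ⟨i, rfl⟩
    fin_cases i
    · exact hgA
    · exact hfA
  have h2 : finrank K (Submodule.span K (Set.range ![g, f])) = 2 := by
    have := finrank_span_eq_card (R := K) hli2
    simpa using this
  have h3 := Submodule.finrank_mono hle
  rw [h2, hArank] at h3
  omega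

/-- Twist of a linear form by a ring endomorphism. -/
noncomputable def tw (φ : K →+* K) (f : (Fin 3 → K) →ₗ[K] K) : (Fin 3 → K) →ₗ[K] K where
  toFun v := ∑ i, φ (f (fun j => if i = j then 1 else 0)) * v i
  map_add' x y := by simp [mul_add, Finset.sum_add_distrib]
  map_smul' a x := by
    simp only [Pi.smul_apply, smul_eq_mul, RingHom.id_apply, Finset.mul_sum]
    exact Finset.sum_congr rfl fun i _ => by ring

lemma tw_apply (φ : K →+* K) (f : (Fin 3 → K) →ₗ[K] K) (v : Fin 3 → K) :
    tw φ f v = ∑ i, φ (f (fun j => if i = j then 1 else 0)) * v i := rfl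

lemma tw_ne_zero (φ : K →+* K) (f : (Fin 3 → K) →ₗ[K] K) (hf : f ≠ 0) :
    tw φ f ≠ 0 := by
  intro h
  apply hf
  have hco : ∀ i : Fin 3, f (fun j => if i = j then 1 else 0) = 0 := by
    intro i
    have h2 : tw φ f (fun j => if i = j then 1 else 0) = 0 := by rw [h]; rfl
    rw [tw_apply] at h2
    simp only [mul_ite, mul_one, mul_zero, Finset.sum_ite_eq, Finset.mem_univ, if_true] at h2
    exact φ.injective (by simpa using h2)
  apply LinearMap.ext
  intro v
  rw [LinearMap.pi_apply_eq_sum_univ f v]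
  simp [hco]

lemma tw_pow (p n : ℕ) [ExpChar K p] (f : (Fin 3 → K) →ₗ[K] K) (v : Fin 3 → K) :
    tw (iterateFrobenius K p n) f (fun i => v i ^ p ^ n) = (f v) ^ p ^ n := by
  set φ := iterateFrobenius K p n with hφ
  have hfv : f v = ∑ i, v i * f (fun j => if i = j then 1 else 0) := by
    simpa [smul_eq_mul] using LinearMap.pi_apply_eq_sum_univ f v
  calc tw φ f (fun i => v i ^ p ^ n)
      = ∑ i, φ (f (fun j => if i = j then 1 else 0)) * φ (v i) := by
        simp only [tw_apply, hφ, iterateFrobenius_def]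
    _ = φ (∑ i, v i * f (fun j => if i = j then 1 else 0)) := by
        rw [map_sum]
        exact Finset.sum_congr rfl fun i _ => by rw [map_mul, mul_comm]
    _ = (f v) ^ p ^ n := by rw [← hfv, hφ, iterateFrobenius_def]

lemma frob_eq (q : ℕ) (hq : q ≠ 0) (x : Pt K) :
    Frob q x = Projectivization.mk K (fun i => x.rep i ^ q) (by
      intro h
      apply x.rep_nonzero
      funext i
      have hi := congrFun h i
      simpa using (pow_eq_zero_iff hq).mp (by simpa using hi)) := by
  rw [Frob, dif_neg hq]

lemma onLine_mk (f : (Fin 3 → K) →ₗ[K] K) (hf : f ≠ 0) (x : Pt K) :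
    OnLine x (Projectivization.mk K f hf) ↔ f x.rep = 0 := by
  have h := (Projectivization.mk_rep (Projectivization.mk K f hf))
  rw [Projectivization.mk_eq_mk_iff] at h
  obtain ⟨c, hc⟩ := h
  rw [OnLine, ← hc, Units.smul_def]
  simp

theorem stmt_12 (p n : ℕ) [Fact p.Prime] (hn : n ≠ 0) (a : Pt (Kbar p n))
    (h7 : (Frob (p ^ n))^[7] a = a)
    (horb : ∀ i, 0 < i → i < 7 → (Frob (p ^ n))^[i] a ≠ a)
    (h : Collinear3 a (Frob (p ^ n) a) ((Frob (p ^ n))^[2] a)) :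
    ∃ ℓ : Ln (Kbar p n), (∀ i < 7, OnLine ((Frob (p ^ n))^[i] a) ℓ) ∧
      ∀ x : Pt (Kbar p n), OnLine x ℓ → OnLine (Frob (p ^ n) x) ℓ := by
  set K' := Kbar p n
  have hp : p.Prime := Fact.out
  have hq : p ^ n ≠ 0 := pow_ne_zero n hp.pos.ne'
  set F : Pt K' → Pt K' := Frob (p ^ n) with hF
  set φ : K' →+* K' := iterateFrobenius K' p n with hφ
  obtain ⟨f, hf, ha0, ha1, ha2⟩ := h
  -- the twisted form, a line through F-images
  set g : (Fin 3 → K') →ₗ[K'] K' := tw φ f with hg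
  have hgne : g ≠ 0 := tw_ne_zero φ f hf
  -- key vanishing transfer
  have gvan : ∀ x : Pt K', (g (F x).rep = 0 ↔ f x.rep = 0) := by
    intro x
    rw [hF, frob_eq (p ^ n) hq x, vanish_rep_iff, hg, hφ, tw_pow]
    exact pow_eq_zero_iff hq
  -- distinctness of F a and F^2 a
  have hne12 : F a ≠ F^[2] a := by
    intro heq
    apply horb 6 (by norm_num) (by norm_num)
    have h5 := congrArg (F^[5]) heq
    have e1 : F^[5] (F a) = F^[6] a := by
      have := Function.iterate_add_apply F 5 1 a
      simpa using this.symm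
    have e2 : F^[5] (F^[2] a) = F^[7] a := (Function.iterate_add_apply F 5 2 a).symm
    rw [e1, e2, h7] at h5
    exact h5
  -- g vanishes at F a and F^2 a
  have hga1 : g (F a).rep = 0 := (gvan a).mpr ha0
  have hga2 : g (F^[2] a).rep = 0 := by
    have : F^[2] a = F (F a) := by
      rw [Function.iterate_succ_apply', Function.iterate_one]
    rw [this]
    exact (gvan (F a)).mpr ha1
  -- hence g is proportional to f
  have hmk1 : Projectivization.mk K' (F a).rep (F a).rep_nonzero = F a :=
    Projectivization.mk_rep _
  have hmk2 : Projectivization.mk K' (F^[2] a).rep (F^[2] a).rep_nonzero = F^[2] a :=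
    Projectivization.mk_rep _
  obtain ⟨c, hc⟩ := twoper (F a).rep (F^[2] a).rep (F a).rep_nonzero (F^[2] a).rep_nonzero
    (by rw [hmk1, hmk2]; exact hne12) f g hf hgne ha1 ha2 hga1 hga2
  have hcne : c ≠ 0 := by
    rintro rfl
    apply hgne
    rw [hc, zero_smul]
  -- stability of {f = 0} under F
  have key : ∀ x : Pt K', f x.rep = 0 → f (F x).rep = 0 := by
    intro x hx
    have := (gvan x).mpr hx
    rw [hc] at this
    simpa [hcne] using this
  -- all iterates lie on the line
  have hall : ∀ i : ℕ, f ((F^[i] a).rep) = 0 := by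
    intro i
    induction i with
    | zero => simpa using ha0
    | succ k ih =>
        rw [Function.iterate_succ_apply']
        exact key _ ih
  refine ⟨Projectivization.mk K' f hf, fun i _ => ?_, fun x hx => ?_⟩
  · rw [onLine_mk]; exact hall i
  · rw [onLine_mk] at hx ⊢
    exact key x hx
end
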